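/- arXiv:1405.2745 — 3 statements merged into one kernel-verified Lean document; each statement's English description precedes it below -/
import Mathlib

section
/- Fix parameters a, b ∈ ℂ with a, b, 1-a, 1-b nonzero. Define the partially-defined map S on ℂ² by S(x, y) = (x', y') where P = b*y/(a*x), Q = (1-b)(1-y)/((1-a)(1-x)), y' = (Q-1)/(Q-P), x' = P*y' (defined when x, 1-x are nonzero and P ≠ Q). If (x', y') = S(x, y) is defined and S is also defined at (x', y'), then S(x', y') = (x, y); i.e., S is an involution on its generic domain of definition. -/
/-- `P` for the F_I map. -/
noncomputable def PFI (a b : ℂ) (p : ℂ × ℂ) : ℂ := b * p.2 / (a * p.1)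

/-- `Q` for the F_I map. -/
noncomputable def QFI (a b : ℂ) (p : ℂ × ℂ) : ℂ :=
  (1 - b) * (1 - p.2) / ((1 - a) * (1 - p.1))

/-- The F_I map with parameters `a, b`. -/
noncomputable def SFI (a b : ℂ) (p : ℂ × ℂ) : ℂ × ℂ :=
  (PFI a b p * ((QFI a b p - 1) / (QFI a b p - PFI a b p)),
   (QFI a b p - 1) / (QFI a b p - PFI a b p))

/- Solving the F_I triplet-pair system `a x x' = b y y'`, `(1-a)(1-x)(1-x') = (1-b)(1-y)(1-y')`
for `(x', y')` gives `x' = P y'` and `1 - x' = Q (1 - y')`, a linear system with determinant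
`Q - P`, whose unique solution is `S (x, y)`. The system is symmetric under `(x, y) ↔ (x', y')`,
so solving it at `S (x, y)` returns `(x, y)`. -/

def FIPair (a b : ℂ) (p q : ℂ × ℂ) : Prop :=
  a * p.1 * q.1 = b * p.2 * q.2 ∧
    (1 - a) * (1 - p.1) * (1 - q.1) = (1 - b) * (1 - p.2) * (1 - q.2)

section

variable {a b : ℂ} {p q : ℂ × ℂ}

theorem FIPair.symm (h : FIPair a b p q) : FIPair a b q p :=
  ⟨by linear_combination h.1, by linear_combination h.2⟩

theorem fiPair_iff (ha : a ≠ 0) (ha' : 1 - a ≠ 0) (hx : p.1 ≠ 0) (hx' : 1 - p.1 ≠ 0) :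
    FIPair a b p q ↔ q.1 = PFI a b p * q.2 ∧ 1 - q.1 = QFI a b p * (1 - q.2) := by
  unfold FIPair PFI QFI
  rw [div_mul_eq_mul_div, div_mul_eq_mul_div, eq_div_iff (mul_ne_zero ha hx),
    eq_div_iff (mul_ne_zero ha' hx')]
  constructor <;> rintro ⟨h₁, h₂⟩ <;> exact ⟨by linear_combination h₁, by linear_combination h₂⟩

theorem sFI_eq_iff (hPQ : PFI a b p ≠ QFI a b p) :
    SFI a b p = q ↔ q.1 = PFI a b p * q.2 ∧ 1 - q.1 = QFI a b p * (1 - q.2) := by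
  obtain ⟨u, v⟩ := q
  have hQP : QFI a b p - PFI a b p ≠ 0 := sub_ne_zero.2 hPQ.symm
  simp only [SFI, Prod.mk.injEq]
  constructor
  · rintro ⟨rfl, rfl⟩
    exact ⟨rfl, by field_simp; ring⟩
  · rintro ⟨rfl, hv⟩
    have hv' : v = (QFI a b p - 1) / (QFI a b p - PFI a b p) := by
      rw [eq_div_iff hQP]; linear_combination hv
    exact ⟨by rw [hv'], hv'.symm⟩

theorem sFI_eq_iff_fiPair (ha : a ≠ 0) (ha' : 1 - a ≠ 0) (hx : p.1 ≠ 0) (hx' : 1 - p.1 ≠ 0)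
    (hPQ : PFI a b p ≠ QFI a b p) : SFI a b p = q ↔ FIPair a b p q :=
  (sFI_eq_iff hPQ).trans (fiPair_iff ha ha' hx hx').symm

end

theorem stmt_4_general (a b x y : ℂ)
    (ha : a ≠ 0) (ha' : 1 - a ≠ 0)
    (hx : x ≠ 0) (hx' : 1 - x ≠ 0) (hPQ : PFI a b (x, y) ≠ QFI a b (x, y))
    (hx2 : (SFI a b (x, y)).1 ≠ 0) (hx2' : 1 - (SFI a b (x, y)).1 ≠ 0)
    (hPQ2 : PFI a b (SFI a b (x, y)) ≠ QFI a b (SFI a b (x, y))) :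
    SFI a b (SFI a b (x, y)) = (x, y) := by
  have hpair : FIPair a b (x, y) (SFI a b (x, y)) :=
    (sFI_eq_iff_fiPair ha ha' hx hx' hPQ).1 rfl
  exact (sFI_eq_iff_fiPair ha ha' hx2 hx2' hPQ2).2 hpair.symm

/-- The F_I map `S` is an involution on its generic domain of definition. -/
theorem stmt_4 (a b x y : ℂ)
    (ha : a ≠ 0) (hb : b ≠ 0) (ha' : 1 - a ≠ 0) (hb' : 1 - b ≠ 0)
    (hx : x ≠ 0) (hx' : 1 - x ≠ 0) (hPQ : PFI a b (x, y) ≠ QFI a b (x, y))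
    (hx2 : (SFI a b (x, y)).1 ≠ 0) (hx2' : 1 - (SFI a b (x, y)).1 ≠ 0)
    (hPQ2 : PFI a b (SFI a b (x, y)) ≠ QFI a b (SFI a b (x, y))) :
    SFI a b (SFI a b (x, y)) = (x, y) :=
  stmt_4_general a b x y ha ha' hx hx' hPQ hx2 hx2' hPQ2
end

section
/- For all complex numbers h, k1, k2, k3, k4, defining c_{ij} = sinh(k_i - k_j) · sinh(h - k_i - k_j), the identity c_{12}c_{34} - c_{13}c_{24} + c_{14}c_{23} = 0 holds. -/
open Complex

private lemma sinh_mul_sinh (a b : ℂ) :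
    Complex.sinh a * Complex.sinh b =
      (Complex.cosh (a + b) - Complex.cosh (a - b)) / 2 := by
  simp only [Complex.sinh, Complex.cosh, sub_eq_add_neg, neg_add, neg_neg,
    Complex.exp_add]
  ring

private lemma key (h ki kj : ℂ) :
    Complex.sinh (ki - kj) * Complex.sinh (h - ki - kj) =
      (Complex.cosh (h - 2 * kj) - Complex.cosh (h - 2 * ki)) / 2 := by
  rw [sinh_mul_sinh]
  have h1 : ki - kj + (h - ki - kj) = h - 2 * kj := by ring
  have h2 : ki - kj - (h - ki - kj) = -(h - 2 * ki) := by ring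
  rw [h1, h2, Complex.cosh_neg]

/-- The trigonometric case of the Riemann relation for
`c i j = sinh(kᵢ-kⱼ)·sinh(h-kᵢ-kⱼ)`. -/
theorem stmt_7 (h k1 k2 k3 k4 : ℂ) :
    (sinh (k1 - k2) * sinh (h - k1 - k2)) * (sinh (k3 - k4) * sinh (h - k3 - k4)) -
    (sinh (k1 - k3) * sinh (h - k1 - k3)) * (sinh (k2 - k4) * sinh (h - k2 - k4)) +
    (sinh (k1 - k4) * sinh (h - k1 - k4)) * (sinh (k2 - k3) * sinh (h - k2 - k3)) = 0 := by
  rw [key h k1 k2, key h k3 k4, key h k1 k3, key h k2 k4, key h k1 k4, key h k2 k3]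
  ring
end

section
/- Define F(u, h; k1, k2, k3) = [(u-k2)(h-k2-u)(k3-k1)(h-k1-k3)] / [(u-k1)(h-k1-u)(k3-k2)(h-k2-k3)]. Then for all complex u, h, k1, k2, k3 for which both expressions are defined (all denominators nonzero), F(u, h; k1, k2, k3) + F(u, h; k1, k3, k2) = 1. -/
/-- The rational case of the substitution function `F`. -/
noncomputable def Frat (u h k1 k2 k3 : ℂ) : ℂ :=
  ((u - k2) * (h - k2 - u) * (k3 - k1) * (h - k1 - k3)) /
    ((u - k1) * (h - k1 - u) * (k3 - k2) * (h - k2 - k3))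

/-- Compatibility of the rational substitution with `s3 = {k2 ↔ k3, x ↦ 1-x}`:
`F(u,h;k1,k2,k3) + F(u,h;k1,k3,k2) = 1` wherever both are defined. -/
theorem stmt_8 (u h k1 k2 k3 : ℂ)
    (h1 : u - k1 ≠ 0) (h2 : h - k1 - u ≠ 0)
    (h3 : k3 - k2 ≠ 0) (h4 : h - k2 - k3 ≠ 0)
    (h3' : k2 - k3 ≠ 0) (h4' : h - k3 - k2 ≠ 0) :
    Frat u h k1 k2 k3 + Frat u h k1 k3 k2 = 1 := by
  unfold Frat
  have hd1 : (u - k1) * (h - k1 - u) * (k3 - k2) * (h - k2 - k3) ≠ 0 := by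
    exact mul_ne_zero (mul_ne_zero (mul_ne_zero h1 h2) h3) h4
  have hd2 : (u - k1) * (h - k1 - u) * (k2 - k3) * (h - k3 - k2) ≠ 0 := by
    exact mul_ne_zero (mul_ne_zero (mul_ne_zero h1 h2) h3') h4'
  rw [div_add_div _ _ hd1 hd2, div_eq_one_iff_eq (mul_ne_zero hd1 hd2)]
  ring
end
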